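/- Let f be a triangular face of a plane graph with incident vertex degrees d₀ ≤ d₁ ≤ d₂, all in {3,…,8}, satisfying: d₀ ≥ 3; if d₀ = 3 then d₁ ≥ 7; if d₀ = 4 then d₁ ≥ 6, and if moreover d₁ = 6 then d₂ ≥ 7; if d₀ = d₁ = 5 then d₂ ≥ 7. Define the charge sent to f by an incident vertex of degree d as: for d ≥ 7: 3/2 if f is a (3,≥7,≥7)- or (4,6,≥7)-triangle, 7/5 if (5,5,≥7), 5/4 if (4,≥7,≥7), 6/5 if (5,6,8), 11/10 if (5,6,7) or (5,≥7,≥7), 1 if all three degrees are ≥ 6; for d = 6: 11/10 if f is (5,6,6) or (5,6,7), else 1; for d = 5: 4/5; for d = 4: 1/2. Then the total charge received by f is at least 3. -/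

import Mathlib

/-! Every admissible triangle falls into one of seven classes, and in each class the rules
were calibrated so that the three incident vertices send exactly `3`. -/

/-- The charge sent to a triangle with (sorted) incident degrees `(d0, d1, d2)`
by an incident vertex of degree `d`, following rules R1–R4. -/
def triangleSend (d0 d1 d2 d : ℕ) : ℚ :=
  if 7 ≤ d then
    if (d0 = 3 ∧ 7 ≤ d1) ∨ (d0 = 4 ∧ d1 = 6 ∧ 7 ≤ d2) then 3 / 2
    else if d0 = 5 ∧ d1 = 5 then 7 / 5
    else if d0 = 4 ∧ 7 ≤ d1 then 5 / 4
    else if d0 = 5 ∧ d1 = 6 ∧ d2 = 8 then 6 / 5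
    else if (d0 = 5 ∧ d1 = 6 ∧ d2 = 7) ∨ (d0 = 5 ∧ 7 ≤ d1) then 11 / 10
    else if 6 ≤ d0 then 1
    else 0
  else if d = 6 then
    if d0 = 5 ∧ d1 = 6 ∧ (d2 = 6 ∨ d2 = 7) then 11 / 10 else 1
  else if d = 5 then 4 / 5
  else if d = 4 then 1 / 2
  else 0

def triangleReceived (d0 d1 d2 : ℕ) : ℚ :=
  triangleSend d0 d1 d2 d0 + triangleSend d0 d1 d2 d1 + triangleSend d0 d1 d2 d2

section

variable {d0 d1 d2 : ℕ}

theorem triangleReceived_three (h1 : 7 ≤ d1) (h12 : d1 ≤ d2) : triangleReceived 3 d1 d2 = 3 := by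
  simp [triangleReceived, triangleSend, h1, h1.trans h12]

theorem triangleReceived_four_six (h2 : 7 ≤ d2) : triangleReceived 4 6 d2 = 3 := by
  norm_num [triangleReceived, triangleSend, h2]

theorem triangleReceived_four (h1 : 7 ≤ d1) (h12 : d1 ≤ d2) : triangleReceived 4 d1 d2 = 3 := by
  have h1' : d1 ≠ 6 := by omega
  norm_num [triangleReceived, triangleSend, h1, h1.trans h12, h1']

theorem triangleReceived_five_five (h2 : 7 ≤ d2) : triangleReceived 5 5 d2 = 3 := by
  norm_num [triangleReceived, triangleSend, h2]

theorem triangleReceived_five_six (h2 : 6 ≤ d2) (h2' : d2 ≤ 8) : triangleReceived 5 6 d2 = 3 := by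
  interval_cases d2 <;> norm_num [triangleReceived, triangleSend]

theorem triangleReceived_five (h1 : 7 ≤ d1) (h12 : d1 ≤ d2) : triangleReceived 5 d1 d2 = 3 := by
  have h1' : d1 ≠ 5 ∧ d1 ≠ 6 := by omega
  norm_num [triangleReceived, triangleSend, h1, h1.trans h12, h1']

theorem triangleSend_of_six_le (h0 : 6 ≤ d0) {d : ℕ} (hd : 6 ≤ d) : triangleSend d0 d1 d2 d = 1 := by
  unfold triangleSend
  split_ifs <;> first | omega | rfl

theorem triangleReceived_of_six_le (h0 : 6 ≤ d0) (h01 : d0 ≤ d1) (h12 : d1 ≤ d2) :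
    triangleReceived d0 d1 d2 = 3 := by
  rw [triangleReceived, triangleSend_of_six_le h0 h0, triangleSend_of_six_le h0 (h0.trans h01),
    triangleSend_of_six_le h0 (h0.trans (h01.trans h12))]
  norm_num

end

/-- For every admissible degree triple `d₀ ≤ d₁ ≤ d₂` of a
triangular face (degrees in `{3,…,8}`, with the constraints coming from the
reducibility of configurations A1, B1 and B2), the total charge received by the
triangle is at least 3. -/
theorem triangle_receives_three (d0 d1 d2 : ℕ)
    (h01 : d0 ≤ d1) (h12 : d1 ≤ d2) (hlo : 3 ≤ d0) (hhi : d2 ≤ 8)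
    (hA : d0 = 3 → 7 ≤ d1)
    (hB : d0 = 4 → 6 ≤ d1)
    (hC : d0 = 4 → d1 = 6 → 7 ≤ d2)
    (hD : d0 = 5 → d1 = 5 → 7 ≤ d2) :
    3 ≤ triangleSend d0 d1 d2 d0 + triangleSend d0 d1 d2 d1 + triangleSend d0 d1 d2 d2 := by
  suffices triangleReceived d0 d1 d2 = 3 from this.ge
  obtain rfl | rfl | rfl | h6 : d0 = 3 ∨ d0 = 4 ∨ d0 = 5 ∨ 6 ≤ d0 := by omega
  · exact triangleReceived_three (hA rfl) h12
  · obtain rfl | h7 : d1 = 6 ∨ 7 ≤ d1 := by have := hB rfl; omega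
    · exact triangleReceived_four_six (hC rfl rfl)
    · exact triangleReceived_four h7 h12
  · obtain rfl | rfl | h7 : d1 = 5 ∨ d1 = 6 ∨ 7 ≤ d1 := by omega
    · exact triangleReceived_five_five (hD rfl rfl)
    · exact triangleReceived_five_six h12 hhi
    · exact triangleReceived_five h7 h12
  · exact triangleReceived_of_six_le h6 h01 h12
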